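/- Let T be a tree with |V(T)| ≥ 3 and let u be a vertex of T that is not a support vertex of T and has at most one neighbor in T that is not a support vertex of T. Let G_1 be the graph obtained from T by attaching a new leaf vertex v adjacent to u. Then |𝒟(G_1)| ≤ 5·|𝒟(T∖u)|, where T∖u is the induced subgraph on V(T) ∖ {u}. -/

import Mathlib

open scoped Classical

/-- The family of all dominating sets of `G`, as a `Finset` of `Finset`s. -/
noncomputable def domSets {V : Type*} [Fintype V] (G : SimpleGraph V) :
    Finset (Finset V) :=
  Finset.univ.filter fun S => ∀ v ∉ S, ∃ u ∈ S, G.Adj u v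

/-- The average order of a dominating set of `G`. -/
noncomputable def avd {V : Type*} [Fintype V] (G : SimpleGraph V) : ℚ :=
  (∑ S ∈ domSets G, (S.card : ℚ)) / ((domSets G).card : ℚ)

/-- A leaf is a vertex of degree one. -/
noncomputable def IsLeaf {V : Type*} [Fintype V] (G : SimpleGraph V) (v : V) : Prop :=
  G.degree v = 1

/-- The set of leaf neighbors of `w` in `G`. -/
noncomputable def leafNbrSet {V : Type*} [Fintype V] (G : SimpleGraph V) (w : V) : Set V :=
  {v | G.Adj w v ∧ IsLeaf G v}

/-- A support vertex is a vertex adjacent to at least one leaf. -/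
noncomputable def IsSupport {V : Type*} [Fintype V] (G : SimpleGraph V) (w : V) : Prop :=
  ∃ v, G.Adj w v ∧ IsLeaf G v

/-- `addLeaf G u` is the graph obtained from `G` by attaching one new leaf vertex
(the vertex `none`) adjacent to `u`. -/
def addLeaf {V : Type*} (G : SimpleGraph V) (u : V) : SimpleGraph (Option V) :=
  SimpleGraph.fromRel fun a b =>
    match a, b with
    | some x, some y => G.Adj x y
    | some x, none => x = u
    | none, some y => y = u
    | none, none => False

/-! Send a dominating set `S` of `addLeaf T u` to its trace on `T - u`, enlarged by `z` when
`u ∈ S`. A vertex of `T - u` left undominated by the trace is dominated by `u` alone, so it is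
a neighbour of `u` whose only possible leaf neighbour is `u`. There is at most one such vertex
`z`: the unique neighbour of `u` if `u` is a leaf, otherwise the only non-support neighbour
of `u`. Hence the image is a dominating set `D` of `T - u`. Since `S` is determined by
its trace and by which of `u` and the new leaf it contains, the fibre over `D` has at most
`1 + 2 · 2` elements: if `u ∉ S` the trace is `D` and the new leaf lies in `S`; if `u ∈ S` the
trace is `D` or `D \ {z}`, and the new leaf may or may not be in `S`. -/

section DominatingSets

section addLeaf

variable {V : Type*} {G : SimpleGraph V} {u : V}

@[simp]
lemma addLeaf_adj_some_some {x y : V} : (addLeaf G u).Adj (some x) (some y) ↔ G.Adj x y := by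
  simp only [addLeaf, SimpleGraph.fromRel_adj, ne_eq, Option.some.injEq]
  exact ⟨fun h => h.2.elim id (·.symm), fun h => ⟨h.ne, .inl h⟩⟩

@[simp]
lemma addLeaf_adj_none_some {y : V} : (addLeaf G u).Adj none (some y) ↔ y = u := by
  simp [addLeaf]

@[simp]
lemma addLeaf_adj_some_none {x : V} : (addLeaf G u).Adj (some x) none ↔ x = u := by
  simp [addLeaf]

end addLeaf

lemma Finset.eq_or_eq_sdiff_of_union_eq {α : Type*} [DecidableEq α] {A Z D : Finset α}
    (hZ : Z.card ≤ 1) (h : A ∪ Z = D) : A = D ∨ A = D \ Z := by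
  by_cases hAZ : Disjoint A Z
  · exact .inr (by rw [← h, Finset.union_sdiff_cancel_right hAZ])
  · obtain ⟨z, hzA, hzZ⟩ := Finset.not_disjoint_iff.mp hAZ
    have hZA : Z ⊆ A := fun y hy => Finset.card_le_one.mp hZ y hy z hzZ ▸ hzA
    exact .inl (by rw [← h, Finset.union_eq_left.mpr hZA])

variable {V : Type*}

noncomputable def restrictCompl (u : V) (S : Finset (Option V)) : Finset ↥({u}ᶜ : Set V) :=
  S.eraseNone.subtype (· ∈ ({u}ᶜ : Set V))

@[simp]
lemma mem_restrictCompl {u : V} {S : Finset (Option V)} {x : ↥({u}ᶜ : Set V)} :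
    x ∈ restrictCompl u S ↔ some (x : V) ∈ S := by
  simp [restrictCompl]

lemma restrictCompl_prod_decide_mem_injective (u : V) :
    Function.Injective fun S : Finset (Option V) =>
      (restrictCompl u S, decide (some u ∈ S), decide (none ∈ S)) := by
  intro S S' h
  simp only [Prod.mk.injEq, decide_eq_decide] at h
  obtain ⟨hres, hu, hnone⟩ := h
  ext (_ | x)
  · exact hnone
  by_cases hx : x = u
  · subst hx; exact hu
  · simpa using congrArg ((⟨x, hx⟩ : ↥({u}ᶜ : Set V)) ∈ ·) hres

variable [Fintype V]

lemma mem_domSets {G : SimpleGraph V} {S : Finset V} :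
    S ∈ domSets G ↔ ∀ v ∉ S, ∃ u ∈ S, G.Adj u v := by
  simp [domSets]

lemma IsLeaf.eq_of_adj {G : SimpleGraph V} {l x y : V} (hl : IsLeaf G l) (hx : G.Adj l x)
    (hy : G.Adj l y) : x = y :=
  (SimpleGraph.degree_eq_one_iff_existsUnique_adj.mp hl).unique hx hy

section domination

variable {G : SimpleGraph V} {u : V} {S : Finset (Option V)}

lemma some_mem_or_none_mem_of_mem_domSets (hS : S ∈ domSets (addLeaf G u)) :
    some u ∈ S ∨ none ∈ S := by
  by_contra! h
  obtain ⟨_ | y, hy, hadj⟩ := mem_domSets.mp hS none h.2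
  · exact h.2 hy
  · rw [addLeaf_adj_some_none] at hadj
    exact h.1 (hadj ▸ hy)

variable {x : ↥({u}ᶜ : Set V)}

lemma mem_and_adj_of_not_dominated (hS : S ∈ domSets (addLeaf G u))
    (hx : x ∉ restrictCompl u S)
    (hund : ∀ a ∈ restrictCompl u S, ¬ (G.induce {u}ᶜ).Adj a x) :
    some u ∈ S ∧ G.Adj u x := by
  obtain ⟨_ | y, hy, hadj⟩ := mem_domSets.mp hS (some x) (by simpa using hx)
  · exact absurd (addLeaf_adj_none_some.mp hadj) x.2
  · rw [addLeaf_adj_some_some] at hadj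
    by_cases hyu : y = u
    · subst hyu
      exact ⟨hy, hadj⟩
    · exact absurd hadj (hund ⟨y, hyu⟩ (by simpa using hy))

lemma not_isSupport_or_isLeaf_of_not_dominated (hS : S ∈ domSets (addLeaf G u))
    (hx : x ∉ restrictCompl u S)
    (hund : ∀ a ∈ restrictCompl u S, ¬ (G.induce {u}ᶜ).Adj a x) :
    ¬ IsSupport G x ∨ IsLeaf G u := by
  by_contra! h
  obtain ⟨⟨l, hxl, hl⟩, hu⟩ := h
  have hlu : l ≠ u := fun h => hu (h ▸ hl)
  by_cases hlS : some l ∈ S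
  · exact hund ⟨l, hlu⟩ (by simpa using hlS) hxl.symm
  obtain ⟨_ | y, hy, hadj⟩ := mem_domSets.mp hS (some l) hlS
  · exact hlu (addLeaf_adj_none_some.mp hadj)
  · rw [addLeaf_adj_some_some] at hadj
    exact hx (by simpa [hl.eq_of_adj hadj.symm hxl.symm] using hy)

end domination

theorem card_domSets_addLeaf_le_five_mul {G : SimpleGraph V} {u : V}
    (Z : Finset ↥({u}ᶜ : Set V)) (hZ : Z.card ≤ 1)
    (hmem : ∀ S ∈ domSets (addLeaf G u), ∀ x ∉ restrictCompl u S,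
      (∀ a ∈ restrictCompl u S, ¬ (G.induce {u}ᶜ).Adj a x) → x ∈ Z) :
    (domSets (addLeaf G u)).card ≤ 5 * (domSets (G.induce ({u}ᶜ : Set V))).card := by
  set f : Finset (Option V) → Finset ↥({u}ᶜ : Set V) := fun S =>
    if some u ∈ S then restrictCompl u S ∪ Z else restrictCompl u S with hf
  refine Finset.card_le_mul_card_image_of_maps_to (f := f) ?_ 5 ?_
  · intro S hS
    refine mem_domSets.mpr fun x hx => ?_
    by_contra! hund
    have hsub : restrictCompl u S ⊆ f S := by
      simp only [hf]; split_ifs <;> simp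
    have hxS : x ∉ restrictCompl u S := fun h => hx (hsub h)
    have hund' : ∀ a ∈ restrictCompl u S, ¬ (G.induce {u}ᶜ).Adj a x :=
      fun a ha => hund a (hsub ha)
    have huS := (mem_and_adj_of_not_dominated hS hxS hund').1
    exact hx (by simp [hf, huS, hmem S hS x hxS hund'])
  · intro D _
    calc _ ≤ ({(D, true, true), (D, true, false), (D, false, true), (D \ Z, true, true),
            (D \ Z, true, false)} : Finset _).card :=
          Finset.card_le_card_of_injOn _ ?_ (restrictCompl_prod_decide_mem_injective u).injOn
      _ ≤ 5 := Finset.card_le_five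
    intro S hS
    obtain ⟨hS, hfS⟩ := Finset.mem_filter.mp hS
    by_cases huS : some u ∈ S
    · have hunion : restrictCompl u S ∪ Z = D := by simpa [hf, huS] using hfS
      rcases Finset.eq_or_eq_sdiff_of_union_eq hZ hunion with h | h <;>
        by_cases hn : none ∈ S <;> simp [h, huS, hn]
    · have hn := (some_mem_or_none_mem_of_mem_domSets hS).resolve_left huS
      have hres : restrictCompl u S = D := by simpa [hf, huS] using hfS
      simp [hres, huS, hn]

lemma eq_of_adj_of_not_isSupport_or_isLeaf {G : SimpleGraph V} {u x y : V}
    (hone : {x | G.Adj u x ∧ ¬ IsSupport G x}.ncard ≤ 1)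
    (hx : G.Adj u x) (hx' : ¬ IsSupport G x ∨ IsLeaf G u)
    (hy : G.Adj u y) (hy' : ¬ IsSupport G y ∨ IsLeaf G u) : x = y := by
  by_cases hu : IsLeaf G u
  · exact hu.eq_of_adj hx hy
  · exact (Set.ncard_le_one (Set.toFinite _)).mp hone
      x ⟨hx, hx'.resolve_right hu⟩ y ⟨hy, hy'.resolve_right hu⟩

end DominatingSets

theorem domSets_addLeaf_le_five_general {V : Type*} [Fintype V] (T : SimpleGraph V) (u : V)
    (hone : {x | T.Adj u x ∧ ¬ IsSupport T x}.ncard ≤ 1) :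
    (domSets (addLeaf T u)).card ≤ 5 * (domSets (T.induce ({u}ᶜ))).card := by
  refine card_domSets_addLeaf_le_five_mul
    (Finset.univ.filter fun x => T.Adj u x ∧ (¬ IsSupport T x ∨ IsLeaf T u)) ?_ ?_
  · refine Finset.card_le_one.mpr fun x hx y hy => Subtype.ext ?_
    simp only [Finset.mem_filter, Finset.mem_univ, true_and] at hx hy
    exact eq_of_adj_of_not_isSupport_or_isLeaf hone hx.1 hx.2 hy.1 hy.2
  · intro S hS x hx hund
    simpa using ⟨(mem_and_adj_of_not_dominated hS hx hund).2,
      not_isSupport_or_isLeaf_of_not_dominated hS hx hund⟩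

/-- If `T` is a tree on at least three vertices, `u` is not a support vertex of `T` and
has at most one non-support neighbor, and `G₁` is obtained from `T` by attaching a new
leaf at `u`, then `|𝒟(G₁)| ≤ 5·|𝒟(T∖u)|`. -/
theorem domSets_addLeaf_le_five {V : Type*} [Fintype V] (T : SimpleGraph V)
    (htree : T.IsTree) (hn : 3 ≤ Fintype.card V) (u : V)
    (hu : ¬ IsSupport T u)
    (hone : {x | T.Adj u x ∧ ¬ IsSupport T x}.ncard ≤ 1) :
    (domSets (addLeaf T u)).card ≤ 5 * (domSets (T.induce ({u}ᶜ))).card :=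
  domSets_addLeaf_le_five_general T u hone
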